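/- arXiv:2506.15632 — 2 statements merged into one kernel-verified Lean document; each statement's English description precedes it below -/
import Mathlib

section
/- Let h : ℝⁿ → ℝ be differentiable with L-Lipschitz gradient and strongly quasiconvex with modulus γ > 0, with global minimizer x̄. Then for all x ∈ ℝⁿ, ⟨∇h(x), x - x̄⟩ ≥ (γ/2)‖x - x̄‖² ≥ (γ/L)(h(x) - h(x̄)); in particular h satisfies the quasar-convexity inequality ⟨∇h(x), x - x̄⟩ ≥ κ(h(x) - h(x̄)) with κ = γ/L. -/
/-!
Comparing `h` along the segment from `x` to a minimiser `x̄` with strong quasiconvexity gives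
`h (x + t (x̄ - x)) ≤ h x - t (1 - t) (γ/2) ‖x - x̄‖²`; differentiating at `t = 0` yields
`⟨∇h(x), x - x̄⟩ ≥ (γ/2) ‖x - x̄‖²`. Since `∇h(x̄) = 0`, the descent lemma for the `L`-Lipschitz
gradient gives `h x - h x̄ ≤ (L/2) ‖x - x̄‖²`, which is the second inequality after scaling by `γ/L`.
-/

open Set Filter Topology InnerProductSpace RealInnerProductSpace

variable {E : Type*} [NormedAddCommGroup E]

def StrongQuasiconvex [NormedSpace ℝ E] (γ : ℝ) (h : E → ℝ) : Prop :=
  ∀ x y : E, ∀ lam ∈ Icc (0 : ℝ) 1,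
    h (lam • y + (1 - lam) • x) ≤ max (h y) (h x) - lam * (1 - lam) * (γ / 2) * ‖x - y‖ ^ 2

theorem HasDerivAt.le_neg_of_le_sub_mul_one_sub {φ : ℝ → ℝ} {d c : ℝ} (hφ : HasDerivAt φ d 0)
    (hle : ∀ t ∈ Ioo (0 : ℝ) 1, φ t ≤ φ 0 - t * (1 - t) * c) : d ≤ -c := by
  have hslope : Tendsto (slope φ 0) (𝓝[>] 0) (𝓝 d) :=
    (hasDerivAt_iff_tendsto_slope.1 hφ).mono_left (nhdsWithin_mono _ fun _ ht => ne_of_gt ht)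
  have hbound : Tendsto (fun t : ℝ => -(1 - t) * c) (𝓝[>] 0) (𝓝 (-c)) := by
    have : Continuous fun t : ℝ => -(1 - t) * c := by fun_prop
    simpa using this.continuousWithinAt.tendsto (x := 0) (s := Ioi 0)
  refine le_of_tendsto_of_tendsto hslope hbound ?_
  filter_upwards [Ioo_mem_nhdsGT (zero_lt_one' ℝ)] with t ht
  rw [slope_def_field, sub_zero, div_le_iff₀ ht.1]
  linarith [hle t ht]

section InnerProductSpace

variable [InnerProductSpace ℝ E] [CompleteSpace E] {h : E → ℝ}

theorem HasGradientAt.hasDerivAt_comp_add_smul {g x v : E} {t : ℝ}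
    (hg : HasGradientAt h g (x + t • v)) : HasDerivAt (fun s : ℝ => h (x + s • v)) ⟪g, v⟫ t := by
  have hline : HasDerivAt (fun s : ℝ => x + s • v) v t := by
    simpa using ((hasDerivAt_id t).smul_const v).const_add x
  have := hg.hasFDerivAt.comp_hasDerivAt t hline
  simp only [toDual_apply_apply] at this
  exact this

theorem IsLocalMin.hasGradientAt_eq_zero {g x : E} (hmin : IsLocalMin h x)
    (hg : HasGradientAt h g x) : g = 0 :=
  (toDual ℝ E).map_eq_zero_iff.1 (hmin.hasFDerivAt_eq_zero hg.hasFDerivAt)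

theorem StrongQuasiconvex.inner_gradient_ge {γ : ℝ} {g x y : E} (hsq : StrongQuasiconvex γ h)
    (hg : HasGradientAt h g x) (hyx : h y ≤ h x) : γ / 2 * ‖x - y‖ ^ 2 ≤ ⟪g, x - y⟫ := by
  have hderiv : HasDerivAt (fun t : ℝ => h (x + t • (y - x))) ⟪g, y - x⟫ 0 :=
    HasGradientAt.hasDerivAt_comp_add_smul (by simpa using hg)
  have hsegment : ∀ t ∈ Ioo (0 : ℝ) 1,
      h (x + t • (y - x)) ≤ h (x + (0 : ℝ) • (y - x)) - t * (1 - t) * (γ / 2 * ‖x - y‖ ^ 2) := by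
    intro t ht
    have := hsq x y t (Ioo_subset_Icc_self ht)
    rw [max_eq_right hyx, show t • y + (1 - t) • x = x + t • (y - x) by module] at this
    simpa [mul_assoc] using this
  have := hderiv.le_neg_of_le_sub_mul_one_sub hsegment
  rw [← neg_sub x y, inner_neg_right] at this
  linarith

theorem sub_le_inner_add_of_lipschitz_gradient {g : E → E} {L : ℝ}
    (hgrad : ∀ x, HasGradientAt h (g x) x) (hLip : ∀ x y, ‖g x - g y‖ ≤ L * ‖x - y‖) (x y : E) :
    h y - h x ≤ ⟪g x, y - x⟫ + L / 2 * ‖y - x‖ ^ 2 := by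
  set v := y - x
  let F : ℝ → ℝ := fun t => h (x + t • v) - t * ⟪g x, v⟫ - L / 2 * ‖v‖ ^ 2 * t ^ 2
  have hF : ∀ t, HasDerivAt F (⟪g (x + t • v), v⟫ - ⟪g x, v⟫ - L * ‖v‖ ^ 2 * t) t := by
    intro t
    have hquad := (hasDerivAt_pow 2 t).const_mul (L / 2 * ‖v‖ ^ 2)
    refine (((hgrad _).hasDerivAt_comp_add_smul.sub
      ((hasDerivAt_id t).mul_const ⟪g x, v⟫)).sub hquad).congr_deriv ?_
    simp only [one_mul, Nat.cast_ofNat]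
    ring
  have hF' : ∀ t ∈ Ioo (0 : ℝ) 1, ⟪g (x + t • v), v⟫ - ⟪g x, v⟫ - L * ‖v‖ ^ 2 * t ≤ 0 := by
    intro t ht
    rw [← inner_sub_left, sub_nonpos]
    calc ⟪g (x + t • v) - g x, v⟫
        ≤ ‖g (x + t • v) - g x‖ * ‖v‖ := real_inner_le_norm _ _
      _ ≤ L * ‖x + t • v - x‖ * ‖v‖ := by gcongr; exact hLip _ _
      _ = L * ‖v‖ ^ 2 * t := by
        rw [add_sub_cancel_left, norm_smul, Real.norm_of_nonneg ht.1.le]; ring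
  have hanti : AntitoneOn F (Icc 0 1) :=
    antitoneOn_of_hasDerivWithinAt_nonpos (convex_Icc 0 1)
      (fun t _ => (hF t).continuousAt.continuousWithinAt)
      (fun t _ => (hF t).hasDerivWithinAt) (by simpa using hF')
  have hF0 : F 0 = h x := by simp [F]
  have hF1 : F 1 = h y - ⟪g x, v⟫ - L / 2 * ‖v‖ ^ 2 := by simp [F, v]
  linarith [hanti (left_mem_Icc.2 zero_le_one) (right_mem_Icc.2 zero_le_one) zero_le_one]

end InnerProductSpace

theorem quasar_convexity_of_strongly_quasiconvex
    {n : ℕ} (h : EuclideanSpace ℝ (Fin n) → ℝ)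
    (g : EuclideanSpace ℝ (Fin n) → EuclideanSpace ℝ (Fin n))
    (hgrad : ∀ x, HasGradientAt h (g x) x)
    (L : ℝ) (hL : 0 < L) (hLip : ∀ x y, ‖g x - g y‖ ≤ L * ‖x - y‖)
    (γ : ℝ) (hγ : 0 < γ)
    (hsq : ∀ x y : EuclideanSpace ℝ (Fin n), ∀ lam : ℝ, lam ∈ Set.Icc (0:ℝ) 1 →
      h (lam • y + (1 - lam) • x) ≤
        max (h y) (h x) - lam * (1 - lam) * (γ / 2) * ‖x - y‖ ^ 2)
    (xbar : EuclideanSpace ℝ (Fin n)) (hmin : ∀ x, h xbar ≤ h x) :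
    ∀ x, (γ / 2) * ‖x - xbar‖ ^ 2 ≤ (inner ℝ (g x) (x - xbar) : ℝ) ∧
      (γ / L) * (h x - h xbar) ≤ (γ / 2) * ‖x - xbar‖ ^ 2 := by
  intro x
  refine ⟨StrongQuasiconvex.inner_gradient_ge hsq (hgrad x) (hmin x), ?_⟩
  have hgrad_min : g xbar = 0 :=
    IsLocalMin.hasGradientAt_eq_zero (Eventually.of_forall hmin) (hgrad xbar)
  have hdescent : h x - h xbar ≤ L / 2 * ‖x - xbar‖ ^ 2 := by
    simpa [hgrad_min] using sub_le_inner_add_of_lipschitz_gradient hgrad hLip xbar x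
  calc γ / L * (h x - h xbar) ≤ γ / L * (L / 2 * ‖x - xbar‖ ^ 2) := by gcongr
    _ = γ / 2 * ‖x - xbar‖ ^ 2 := by field_simp
end

section
/- Let h : ℝⁿ → ℝ be differentiable with L-Lipschitz gradient and strongly quasiconvex with modulus γ > 0, with unique minimizer x̄ and h* = h(x̄). Fix η > 1, 0 < β < γ/(ηL²), μ₁ = 1/(1+β(γ-ηβL²)), μ₂ = (1-1/η)/(1+β(γ-ηβL²)), ε ∈ (0, 1/μ₁ - 1), and suppose α + θL ≤ μ₁μ₂(1+ε)/(μ₁μ₂(1+ε) + μ₁ + μ₁/ε + μ₂) with α ∈ [0,1], θ ≥ 0. Define E_k := ‖x_k - x̄‖² + μ₂(1 - (α+θL))‖x_k - x_{k-1}‖² for the Nesterov-type iteration y_k = x_k + α(x_k - x_{k-1}) - θ(∇h(x_k) - ∇h(x_{k-1})), x_{k+1} = y_k - β∇h(y_k). Then E_{k+1} ≤ μ₁(1+ε)E_k for all k ≥ 1, and since μ₁(1+ε) ∈ (0,1), the sequence {x_k} converges linearly to x̄: ‖x_k - x̄‖² ≤ (μ₁(1+ε))^{k-1} E_1. -/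
/-!
Differentiating the strong quasiconvexity inequality along the segment from `z` to the
minimizer `x̄` gives `γ/2 ‖z - x̄‖² ≤ ⟪∇h z, z - x̄⟫`; with `‖∇h z‖ ≤ L ‖z - x̄‖` (since
`∇h x̄ = 0`) one gradient step from `y` satisfies `‖x⁺ - x̄‖² + μ₂ ‖x⁺ - y‖² ≤ μ₁ ‖y - x̄‖²`.
The extrapolation moves `x_k` by at most `(α + θL) ‖x_k - x_{k-1}‖`, so bounding `‖x⁺ - y‖²`
from below and `‖y - x̄‖²` from above (Young's inequality with weight `ε`) in terms of `x_k`
yields `E_{k+1} ≤ μ₁(1+ε) E_k`: the bound on `α + θL` is exactly what makes the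
coefficients of `‖x_k - x_{k-1}‖²` fit.
-/

open Filter Topology Set InnerProductSpace

def StronglyQuasiconvexWith {F : Type*} [SeminormedAddCommGroup F] [Module ℝ F]
    (γ : ℝ) (f : F → ℝ) : Prop :=
  ∀ x y : F, ∀ lam : ℝ, lam ∈ Icc (0:ℝ) 1 →
    f (lam • y + (1 - lam) • x) ≤ max (f y) (f x) - lam * (1 - lam) * (γ / 2) * ‖x - y‖ ^ 2

theorem add_sq_le_one_add_mul_sq_add {a b ε : ℝ} (hε : 0 < ε) :
    (a + b) ^ 2 ≤ (1 + ε) * a ^ 2 + (1 + ε⁻¹) * b ^ 2 := by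
  have key : (1 + ε) * a ^ 2 + (1 + ε⁻¹) * b ^ 2 - (a + b) ^ 2 = (ε * a - b) ^ 2 / ε := by
    field_simp; ring
  have : 0 ≤ (ε * a - b) ^ 2 / ε := by positivity
  linarith

theorem norm_add_sq_le_one_add_mul {F : Type*} [SeminormedAddCommGroup F] (p s : F) {ε : ℝ}
    (hε : 0 < ε) : ‖p + s‖ ^ 2 ≤ (1 + ε) * ‖p‖ ^ 2 + (1 + ε⁻¹) * ‖s‖ ^ 2 :=
  (pow_le_pow_left₀ (norm_nonneg _) (norm_add_le p s) 2).trans (add_sq_le_one_add_mul_sq_add hε)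

theorem sq_norm_sub_ge_of_norm_le {F : Type*} [SeminormedAddCommGroup F] {u s v : F} {τ : ℝ}
    (hτ : 0 ≤ τ) (hs : ‖s‖ ≤ τ * ‖v‖) :
    (1 - τ) * ‖u‖ ^ 2 - τ * ‖v‖ ^ 2 ≤ ‖u - s‖ ^ 2 := by
  have hrev : (‖u‖ - ‖s‖) ^ 2 ≤ ‖u - s‖ ^ 2 :=
    sq_le_sq.2 ((abs_norm_sub_norm_le u s).trans_eq (abs_norm _).symm)
  have hus : ‖u‖ * ‖s‖ ≤ ‖u‖ * (τ * ‖v‖) := mul_le_mul_of_nonneg_left hs (norm_nonneg u)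
  nlinarith [mul_nonneg hτ (sq_nonneg (‖u‖ - ‖v‖)), sq_nonneg ‖s‖]

theorem norm_smul_sub_smul_sub_le {F : Type*} [SeminormedAddCommGroup F] [NormedSpace ℝ F]
    {g : F → F} {L : ℝ} (hg : ∀ x y, ‖g x - g y‖ ≤ L * ‖x - y‖) {α θ : ℝ} (hα : 0 ≤ α)
    (hθ : 0 ≤ θ) (a b : F) :
    ‖α • (a - b) - θ • (g a - g b)‖ ≤ (α + θ * L) * ‖a - b‖ :=
  calc ‖α • (a - b) - θ • (g a - g b)‖ ≤ α * ‖a - b‖ + θ * ‖g a - g b‖ := by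
        refine (norm_sub_le _ _).trans_eq ?_
        rw [norm_smul_of_nonneg hα, norm_smul_of_nonneg hθ]
    _ ≤ α * ‖a - b‖ + θ * (L * ‖a - b‖) := by gcongr; exact hg a b
    _ = (α + θ * L) * ‖a - b‖ := by ring

theorem IsLocalMin.hasGradientAt_eq_zero_s15 {F : Type*} [NormedAddCommGroup F]
    [InnerProductSpace ℝ F] [CompleteSpace F] {f : F → ℝ} {f' x : F} (hmin : IsLocalMin f x)
    (hf : HasGradientAt f f' x) : f' = 0 :=
  (toDual ℝ F).injective ((hmin.hasFDerivAt_eq_zero hf.hasFDerivAt).trans (map_zero _).symm)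

theorem HasDerivAt.le_neg_of_le_sub_mul {φ : ℝ → ℝ} {d c : ℝ} (hφ : HasDerivAt φ d 0)
    (hle : ∀ t ∈ Ioc (0:ℝ) 1, φ t ≤ φ 0 - t * (1 - t) * c) : d ≤ -c := by
  have hslope : ∀ t ∈ Ioc (0:ℝ) 1, t⁻¹ • (φ (0 + t) - φ 0) ≤ -((1 - t) * c) := by
    intro t ht
    rw [zero_add, smul_eq_mul, inv_mul_le_iff₀ ht.1]
    linarith [hle t ht]
  have hlim : Tendsto (fun t : ℝ => -((1 - t) * c)) (𝓝[>] 0) (𝓝 (-((1 - 0) * c))) :=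
    ((continuous_const.sub continuous_id).mul continuous_const).neg.continuousAt.tendsto.mono_left
      nhdsWithin_le_nhds
  rw [sub_zero, one_mul] at hlim
  refine le_of_tendsto_of_tendsto hφ.tendsto_slope_zero_right hlim ?_
  filter_upwards [Ioc_mem_nhdsGT zero_lt_one] with t ht using hslope t ht

theorem StronglyQuasiconvexWith.mul_sq_le_inner_gradient {F : Type*} [NormedAddCommGroup F]
    [InnerProductSpace ℝ F] [CompleteSpace F] {f : F → ℝ} {γ : ℝ}
    (hf : StronglyQuasiconvexWith γ f) {z x d : F} (hd : HasGradientAt f d z) (hx : f x ≤ f z) :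
    γ / 2 * ‖z - x‖ ^ 2 ≤ ⟪d, z - x⟫_ℝ := by
  set φ : ℝ → ℝ := fun t => f (z + t • (x - z))
  have hline : HasDerivAt (fun t : ℝ => z + t • (x - z)) (x - z) 0 := by
    simpa using ((hasDerivAt_id (0:ℝ)).smul_const (x - z)).const_add z
  have hφ : HasDerivAt φ ⟪d, x - z⟫_ℝ 0 := by
    have hf' : HasFDerivAt f (toDual ℝ F d) (z + (0:ℝ) • (x - z)) := by
      simpa using hd.hasFDerivAt
    have := hf'.comp_hasDerivAt 0 hline
    rwa [toDual_apply_apply] at this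
  have hle : ∀ t ∈ Ioc (0:ℝ) 1, φ t ≤ φ 0 - t * (1 - t) * (γ / 2 * ‖z - x‖ ^ 2) := by
    intro t ht
    have h := hf z x t (Ioc_subset_Icc_self ht)
    rw [max_eq_right hx, show t • x + (1 - t) • z = z + t • (x - z) by module] at h
    simp only [φ, zero_smul, add_zero]
    linarith
  have := hφ.le_neg_of_le_sub_mul hle
  rw [← neg_sub z x, inner_neg_right] at this
  linarith

theorem gradient_step_contraction {F : Type*} [NormedAddCommGroup F] [InnerProductSpace ℝ F]
    {y x d : F} {β γ η L : ℝ} (hinner : γ / 2 * ‖y - x‖ ^ 2 ≤ ⟪d, y - x⟫_ℝ)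
    (hd : ‖d‖ ≤ L * ‖y - x‖) (hη : 1 < η) (hβ : 0 < β) (hβγ : η * β * L ^ 2 < γ) {μ₁ μ₂ : ℝ}
    (hμ₁ : μ₁ = 1 / (1 + β * (γ - η * β * L ^ 2)))
    (hμ₂ : μ₂ = (1 - 1 / η) / (1 + β * (γ - η * β * L ^ 2))) :
    ‖y - β • d - x‖ ^ 2 + μ₂ * ‖β • d‖ ^ 2 ≤ μ₁ * ‖y - x‖ ^ 2 := by
  have hc : ‖y - β • d - x‖ ^ 2 = ‖y - x‖ ^ 2 - 2 * β * ⟪d, y - x⟫_ℝ + β ^ 2 * ‖d‖ ^ 2 := by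
    rw [show y - β • d - x = (y - x) - β • d by abel, norm_sub_sq_real, real_inner_smul_right,
      real_inner_comm, norm_smul, Real.norm_of_nonneg hβ.le, mul_pow]
    ring
  set a := ‖y - x‖ ^ 2
  set G := ‖d‖ ^ 2
  set c := ‖y - β • d - x‖ ^ 2
  have hsd : ‖β • d‖ ^ 2 = β ^ 2 * G := by rw [norm_smul, Real.norm_of_nonneg hβ.le, mul_pow]
  have hG : G ≤ L ^ 2 * a := by
    rw [← mul_pow]; exact pow_le_pow_left₀ (norm_nonneg d) hd 2
  have hcγ : c ≤ (1 - β * γ) * a + β ^ 2 * G := by nlinarith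
  have hη0 : 0 < η := by linarith
  have hβL : β * L ^ 2 ≤ γ := by nlinarith [mul_nonneg hβ.le (sq_nonneg L)]
  have hca : c ≤ a := by
    nlinarith [mul_le_mul_of_nonneg_left hG (sq_nonneg β), mul_le_mul_of_nonneg_left hβL
      (mul_nonneg hβ.le (sq_nonneg ‖y - x‖))]
  have hηsq : 0 ≤ η - 2 + 1 / η := by
    have : η - 2 + 1 / η = (η - 1) ^ 2 / η := by field_simp; ring
    rw [this]; positivity
  have h2η : 0 ≤ 2 - 1 / η := by
    have : 1 / η < 1 := (div_lt_one hη0).mpr hη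
    linarith
  have hs : 0 ≤ β * (γ - η * β * L ^ 2) := by nlinarith
  have key : (1 + β * (γ - η * β * L ^ 2)) * c + (1 - 1 / η) * ‖β • d‖ ^ 2 ≤ a := by
    rw [hsd]
    nlinarith [mul_le_mul_of_nonneg_left hca hs, mul_le_mul_of_nonneg_left hG h2η,
      mul_nonneg hηsq (mul_nonneg (sq_nonneg (β * L)) (sq_nonneg ‖y - x‖))]
  have hD : 0 < 1 + β * (γ - η * β * L ^ 2) := by linarith
  have hμ₁D : μ₁ * (1 + β * (γ - η * β * L ^ 2)) = 1 := by rw [hμ₁, one_div_mul_cancel hD.ne']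
  have hμ₂D : μ₂ * (1 + β * (γ - η * β * L ^ 2)) = 1 - 1 / η := by
    rw [hμ₂, div_mul_cancel₀ _ hD.ne']
  refine le_of_mul_le_mul_left ?_ hD
  linear_combination key + ‖β • d‖ ^ 2 * hμ₂D - a * hμ₁D

theorem momentum_lyapunov_step {F : Type*} [SeminormedAddCommGroup F] {x₀ x₁ y x₂ x : F}
    {μ₁ μ₂ τ ε : ℝ} (hμ₁ : 0 ≤ μ₁) (hμ₂ : 0 ≤ μ₂) (hτ : 0 ≤ τ) (hε : 0 < ε)
    (hgrad : ‖x₂ - x‖ ^ 2 + μ₂ * ‖x₂ - y‖ ^ 2 ≤ μ₁ * ‖y - x‖ ^ 2)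
    (hmom : ‖y - x₁‖ ≤ τ * ‖x₁ - x₀‖)
    (hcoef : μ₁ * (1 + ε⁻¹) * τ ^ 2 + μ₂ * τ ≤ μ₁ * (1 + ε) * μ₂ * (1 - τ)) :
    ‖x₂ - x‖ ^ 2 + μ₂ * (1 - τ) * ‖x₂ - x₁‖ ^ 2
      ≤ μ₁ * (1 + ε) * (‖x₁ - x‖ ^ 2 + μ₂ * (1 - τ) * ‖x₁ - x₀‖ ^ 2) := by
  have hii : (1 - τ) * ‖x₂ - x₁‖ ^ 2 - τ * ‖x₁ - x₀‖ ^ 2 ≤ ‖x₂ - y‖ ^ 2 := by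
    simpa using sq_norm_sub_ge_of_norm_le (u := x₂ - x₁) hτ hmom
  have hmom2 : ‖y - x₁‖ ^ 2 ≤ τ ^ 2 * ‖x₁ - x₀‖ ^ 2 := by
    rw [← mul_pow]; exact pow_le_pow_left₀ (norm_nonneg _) hmom 2
  have hiii : ‖y - x‖ ^ 2 ≤ (1 + ε) * ‖x₁ - x‖ ^ 2 + (1 + ε⁻¹) * (τ ^ 2 * ‖x₁ - x₀‖ ^ 2) := by
    have := norm_add_sq_le_one_add_mul (x₁ - x) (y - x₁) hε
    rw [sub_add_sub_cancel'] at this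
    have : 0 ≤ 1 + ε⁻¹ := by positivity
    nlinarith
  nlinarith [mul_le_mul_of_nonneg_left hii hμ₂, mul_le_mul_of_nonneg_left hiii hμ₁,
    mul_le_mul_of_nonneg_right hcoef (sq_nonneg ‖x₁ - x₀‖)]

theorem momentum_coeff_bound {μ₁ μ₂ ε τ : ℝ} (hμ₁ : 0 < μ₁) (hμ₂ : 0 < μ₂) (hε : 0 < ε)
    (hτ : 0 ≤ τ) (h : τ ≤ μ₁ * μ₂ * (1 + ε) / (μ₁ * μ₂ * (1 + ε) + μ₁ + μ₁ / ε + μ₂)) :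
    τ < 1 ∧ μ₁ * (1 + ε⁻¹) * τ ^ 2 + μ₂ * τ ≤ μ₁ * (1 + ε) * μ₂ * (1 - τ) := by
  have hM : 0 < μ₁ * μ₂ * (1 + ε) := by positivity
  have hrest : 0 < μ₁ + μ₁ / ε + μ₂ := by positivity
  rw [le_div_iff₀ (by positivity)] at h
  have hτ1 : τ < 1 := by nlinarith
  refine ⟨hτ1, ?_⟩
  have hsq : μ₁ * (1 + ε⁻¹) * τ ^ 2 ≤ (μ₁ + μ₁ / ε) * τ := by
    rw [show μ₁ * (1 + ε⁻¹) = μ₁ + μ₁ / ε by ring, sq]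
    exact mul_le_mul_of_nonneg_left (mul_le_of_le_one_left hτ hτ1.le) (by positivity)
  nlinarith

theorem nesterov_hessian_linear_convergence_general
    {n : ℕ} (h : EuclideanSpace ℝ (Fin n) → ℝ)
    (g : EuclideanSpace ℝ (Fin n) → EuclideanSpace ℝ (Fin n))
    (hgrad : ∀ x, HasGradientAt h (g x) x)
    (L : ℝ) (hL : 0 < L) (hLip : ∀ x y, ‖g x - g y‖ ≤ L * ‖x - y‖)
    (γ : ℝ)
    (hsq : ∀ x y : EuclideanSpace ℝ (Fin n), ∀ lam : ℝ, lam ∈ Set.Icc (0:ℝ) 1 →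
      h (lam • y + (1 - lam) • x) ≤
        max (h y) (h x) - lam * (1 - lam) * (γ / 2) * ‖x - y‖ ^ 2)
    (xbar : EuclideanSpace ℝ (Fin n)) (hmin : ∀ x, h xbar ≤ h x)
    (η β : ℝ) (hη : 1 < η) (hβ : 0 < β) (hβ' : β < γ / (η * L ^ 2))
    (μ₁ μ₂ : ℝ) (hμ₁ : μ₁ = 1 / (1 + β * (γ - η * β * L ^ 2)))
    (hμ₂ : μ₂ = (1 - 1 / η) / (1 + β * (γ - η * β * L ^ 2)))
    (ε : ℝ) (hε : 0 < ε) (hε' : ε < 1 / μ₁ - 1)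
    (α θ : ℝ) (hα : α ∈ Set.Icc (0:ℝ) 1) (hθ : 0 ≤ θ)
    (hαθ : α + θ * L ≤ μ₁ * μ₂ * (1 + ε) / (μ₁ * μ₂ * (1 + ε) + μ₁ + μ₁ / ε + μ₂))
    (x y : ℕ → EuclideanSpace ℝ (Fin n))
    (hy : ∀ k, y (k + 1) = x (k + 1) + α • (x (k + 1) - x k) - θ • (g (x (k + 1)) - g (x k)))
    (hx : ∀ k, x (k + 2) = y (k + 1) - β • g (y (k + 1)))
    (E : ℕ → ℝ)
    (hE : ∀ k, E k = ‖x (k + 1) - xbar‖ ^ 2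
        + μ₂ * (1 - (α + θ * L)) * ‖x (k + 1) - x k‖ ^ 2) :
    (∀ k, E (k + 1) ≤ μ₁ * (1 + ε) * E k) ∧ (0 < μ₁ * (1 + ε) ∧ μ₁ * (1 + ε) < 1) ∧
      ∀ k, ‖x (k + 1) - xbar‖ ^ 2 ≤ (μ₁ * (1 + ε)) ^ k * E 0 := by
  have hβγ : η * β * L ^ 2 < γ := by
    have := (lt_div_iff₀ (by positivity : 0 < η * L ^ 2)).mp hβ'
    linarith
  have hD : 0 < 1 + β * (γ - η * β * L ^ 2) := by nlinarith
  have hμ₁0 : 0 < μ₁ := by rw [hμ₁]; positivity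
  have hμ₂0 : 0 < μ₂ := by
    rw [hμ₂]; exact div_pos (sub_pos.2 ((div_lt_one (by linarith)).2 hη)) hD
  have hq : 0 < μ₁ * (1 + ε) ∧ μ₁ * (1 + ε) < 1 :=
    ⟨by positivity, (lt_div_iff₀' hμ₁0).mp (by linarith)⟩
  set τ := α + θ * L
  have hτ0 : 0 ≤ τ := add_nonneg hα.1 (mul_nonneg hθ hL.le)
  obtain ⟨hτ1, hcoef⟩ := momentum_coeff_bound hμ₁0 hμ₂0 hε hτ0 hαθ
  have hgx : g xbar = 0 := IsLocalMin.hasGradientAt_eq_zero_s15 (.of_forall hmin) (hgrad xbar)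
  have hstep k : ‖x (k + 2) - xbar‖ ^ 2 + μ₂ * ‖x (k + 2) - y (k + 1)‖ ^ 2
      ≤ μ₁ * ‖y (k + 1) - xbar‖ ^ 2 := by
    rw [hx k, sub_sub_cancel_left, norm_neg]
    exact gradient_step_contraction
      (StronglyQuasiconvexWith.mul_sq_le_inner_gradient hsq (hgrad (y (k + 1))) (hmin _))
      (by simpa [hgx] using hLip (y (k + 1)) xbar) hη hβ hβγ hμ₁ hμ₂
  have hmom k : ‖y (k + 1) - x (k + 1)‖ ≤ τ * ‖x (k + 1) - x k‖ := by
    rw [hy k, add_sub_assoc, add_sub_cancel_left]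
    exact norm_smul_sub_smul_sub_le hLip hα.1 hθ _ _
  have hrec k : E (k + 1) ≤ μ₁ * (1 + ε) * E k := by
    rw [hE, hE]
    exact momentum_lyapunov_step hμ₁0.le hμ₂0.le hτ0 hε (hstep k) (hmom k) hcoef
  refine ⟨hrec, hq, fun k => ?_⟩
  have hE_ge : ‖x (k + 1) - xbar‖ ^ 2 ≤ E k := by
    rw [hE]
    exact le_add_of_nonneg_right (by have := sub_nonneg.2 hτ1.le; positivity)
  exact hE_ge.trans (le_geom hq.1.le k fun j _ => hrec j)

theorem nesterov_hessian_linear_convergence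
    {n : ℕ} (h : EuclideanSpace ℝ (Fin n) → ℝ)
    (g : EuclideanSpace ℝ (Fin n) → EuclideanSpace ℝ (Fin n))
    (hgrad : ∀ x, HasGradientAt h (g x) x)
    (L : ℝ) (hL : 0 < L) (hLip : ∀ x y, ‖g x - g y‖ ≤ L * ‖x - y‖)
    (γ : ℝ) (hγ : 0 < γ)
    (hsq : ∀ x y : EuclideanSpace ℝ (Fin n), ∀ lam : ℝ, lam ∈ Set.Icc (0:ℝ) 1 →
      h (lam • y + (1 - lam) • x) ≤
        max (h y) (h x) - lam * (1 - lam) * (γ / 2) * ‖x - y‖ ^ 2)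
    (xbar : EuclideanSpace ℝ (Fin n)) (hmin : ∀ x, h xbar ≤ h x)
    (η β : ℝ) (hη : 1 < η) (hβ : 0 < β) (hβ' : β < γ / (η * L ^ 2))
    (μ₁ μ₂ : ℝ) (hμ₁ : μ₁ = 1 / (1 + β * (γ - η * β * L ^ 2)))
    (hμ₂ : μ₂ = (1 - 1 / η) / (1 + β * (γ - η * β * L ^ 2)))
    (ε : ℝ) (hε : 0 < ε) (hε' : ε < 1 / μ₁ - 1)
    (α θ : ℝ) (hα : α ∈ Set.Icc (0:ℝ) 1) (hθ : 0 ≤ θ)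
    (hαθ : α + θ * L ≤ μ₁ * μ₂ * (1 + ε) / (μ₁ * μ₂ * (1 + ε) + μ₁ + μ₁ / ε + μ₂))
    (x y : ℕ → EuclideanSpace ℝ (Fin n))
    (hy : ∀ k, y (k + 1) = x (k + 1) + α • (x (k + 1) - x k) - θ • (g (x (k + 1)) - g (x k)))
    (hx : ∀ k, x (k + 2) = y (k + 1) - β • g (y (k + 1)))
    (E : ℕ → ℝ)
    (hE : ∀ k, E k = ‖x (k + 1) - xbar‖ ^ 2
        + μ₂ * (1 - (α + θ * L)) * ‖x (k + 1) - x k‖ ^ 2) :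
    (∀ k, E (k + 1) ≤ μ₁ * (1 + ε) * E k) ∧ (0 < μ₁ * (1 + ε) ∧ μ₁ * (1 + ε) < 1) ∧
      ∀ k, ‖x (k + 1) - xbar‖ ^ 2 ≤ (μ₁ * (1 + ε)) ^ k * E 0 :=
  nesterov_hessian_linear_convergence_general h g hgrad L hL hLip γ hsq xbar hmin η β hη hβ hβ' μ₁
    μ₂ hμ₁ hμ₂ ε hε hε' α θ hα hθ hαθ x y hy hx E hE
end
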